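/- Let α ∈ (−1/2, 1/2) and let u : ℝ → ℝ be twice differentiable, satisfy u''(x) = 2u(x)³ + x·u(x) − α on all of ℝ, and suppose f(x) := 2u(x)² − 2u'(x) + x satisfies f(x) → +∞ as x → +∞ and f(x) < 0 for all sufficiently negative x (as holds for the Hastings–McLeod-type solutions with u(x) ~ −√(−x/2) as x → −∞, for which f(x) → ((−2α−1)/2)·(−x/2)^{−1/2} < 0). Then there is exactly one x₁ ∈ ℝ with f(x₁) = 0, and f'(x₁) = 2α + 1. Consequently the Bäcklund transform v(x) := −u(x) + (2α+1)/f(x) is defined and continuous on ℝ ∖ {x₁} and blows up at x₁ with (x − x₁)·v(x) → 1 as x → x₁; that is, the quasi-Hastings–McLeod solution with parameter α + 1 ∈ (1/2, 3/2) has exactly one real pole, with residue +1. -/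

import Mathlib

/-!
Along a solution of Painlevé II, `f = 2u² - 2u' + x` satisfies the linear equation
`f' = -2u f + (2α + 1)`. With the integrating factor `exp (2 ∫ u)`, the product `f · exp (2 ∫ u)`
has derivative `(2α + 1) exp (2 ∫ u) > 0`, so it is strictly increasing and `f` vanishes at most
once; the sign change of `f` gives a zero `x₁` by the intermediate value theorem. At `x₁` the
equation gives `f'(x₁) = 2α + 1 ≠ 0`, so `(2α + 1)/f` has a simple pole of residue `1` there, while
`-u` stays bounded.
-/

open Filter Topology Set

/-- The auxiliary function `f(x) = 2 u(x)^2 - 2 u'(x) + x` appearing in the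
Bäcklund transformation for Painlevé II. -/
def piiF (u u' : ℝ → ℝ) : ℝ → ℝ := fun x => 2 * (u x) ^ 2 - 2 * u' x + x

/-- The Bäcklund transform `v(x) = -u(x) + (2α+1)/f(x)` of a solution `u`
of Painlevé II with parameter `α`. -/
noncomputable def backlund (α : ℝ) (u u' : ℝ → ℝ) : ℝ → ℝ :=
  fun x => -u x + (2 * α + 1) / piiF u u' x

theorem hasDerivAt_piiF {α x : ℝ} {u u' u'' : ℝ → ℝ} (hu : HasDerivAt u (u' x) x)
    (hu' : HasDerivAt u' (u'' x) x) (hPII : u'' x = 2 * u x ^ 3 + x * u x - α) :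
    HasDerivAt (piiF u u') (-2 * u x * piiF u u' x + (2 * α + 1)) x := by
  have h : HasDerivAt (piiF u u') (2 * (2 * u x ^ 1 * u' x) - 2 * u'' x + 1) x :=
    (((hu.pow 2).const_mul 2).sub (hu'.const_mul 2)).add (hasDerivAt_id x)
  refine h.congr_deriv ?_
  simp only [piiF, hPII]
  ring

theorem continuousOn_backlund {α : ℝ} {u u' : ℝ → ℝ} (hu : Continuous u)
    (hf : Continuous (piiF u u')) : ContinuousOn (backlund α u u') {x | piiF u u' x ≠ 0} :=
  hu.neg.continuousOn.add (continuousOn_const.div hf.continuousOn fun _ hx => hx)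

section LinearODE

variable {f a : ℝ → ℝ} {c : ℝ}

theorem strictMono_mul_exp_neg_integral (ha : Continuous a) (hc : 0 < c)
    (hf : ∀ x, HasDerivAt f (a x * f x + c) x) :
    StrictMono fun x => f x * Real.exp (-∫ t in (0 : ℝ)..x, a t) := by
  refine strictMono_of_hasDerivAt_pos (f' := fun x => c * Real.exp (-∫ t in (0 : ℝ)..x, a t))
    (fun x => ?_) fun x => mul_pos hc (Real.exp_pos _)
  have hE : HasDerivAt (fun x => Real.exp (-∫ t in (0 : ℝ)..x, a t))
      (Real.exp (-∫ t in (0 : ℝ)..x, a t) * -a x) x :=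
    (ha.integral_hasStrictDerivAt 0 x).hasDerivAt.neg.exp
  exact ((hf x).mul hE).congr_deriv (by ring)

theorem subsingleton_zeros_of_hasDerivAt_eq_mul_add (ha : Continuous a) (hc : 0 < c)
    (hf : ∀ x, HasDerivAt f (a x * f x + c) x) : (f ⁻¹' {0}).Subsingleton := by
  intro x hx y hy
  refine (strictMono_mul_exp_neg_integral ha hc hf).injective ?_
  simp only [mem_preimage, mem_singleton_iff] at hx hy
  simp only [hx, hy, zero_mul]

end LinearODE

theorem exists_eq_zero_of_tendsto_atTop_of_eventually_neg {f : ℝ → ℝ} (hf : Continuous f)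
    (htop : Tendsto f atTop atTop) (hbot : ∀ᶠ x in atBot, f x < 0) : ∃ x, f x = 0 :=
  mem_range_of_exists_le_of_exists_ge hf (hbot.exists.imp fun _ => le_of_lt)
    (htop.eventually_ge_atTop 0).exists

theorem tendsto_sub_mul_div_of_hasDerivAt {f : ℝ → ℝ} {c x₀ : ℝ} (hf : HasDerivAt f c x₀)
    (h₀ : f x₀ = 0) (hc : c ≠ 0) :
    Tendsto (fun x => (x - x₀) * (c / f x)) (𝓝[≠] x₀) (𝓝 1) := by
  have hslope : Tendsto (fun x => f x / (x - x₀)) (𝓝[≠] x₀) (𝓝 c) :=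
    (hasDerivAt_iff_tendsto_slope.mp hf).congr fun x => by simp [slope_def_field, h₀]
  have h := (hslope.inv₀ hc).const_mul c
  rw [mul_inv_cancel₀ hc] at h
  exact h.congr fun x => by rw [inv_div, mul_div_assoc', mul_div_assoc', mul_comm]

theorem tendsto_sub_mul_backlund {α x₀ : ℝ} {u u' : ℝ → ℝ} (hu : ContinuousAt u x₀)
    (hf : HasDerivAt (piiF u u') (2 * α + 1) x₀) (h₀ : piiF u u' x₀ = 0) (hα : 2 * α + 1 ≠ 0) :
    Tendsto (fun x => (x - x₀) * backlund α u u' x) (𝓝[≠] x₀) (𝓝 1) := by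
  have hlin : Tendsto (fun x => (x - x₀) * -u x) (𝓝[≠] x₀) (𝓝 0) := by
    have h : Tendsto (fun x => (x - x₀) * -u x) (𝓝 x₀) (𝓝 ((x₀ - x₀) * -u x₀)) :=
      ((continuous_sub_right x₀).continuousAt.mul hu.neg).tendsto
    rw [sub_self, zero_mul] at h
    exact h.mono_left nhdsWithin_le_nhds
  have h := hlin.add (tendsto_sub_mul_div_of_hasDerivAt hf h₀ hα)
  rw [zero_add] at h
  exact h.congr fun x => by simp only [backlund, mul_add]

/-- Proposition 3.4: let `α ∈ (-1/2, 1/2)` and let `u` be a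
globally smooth real solution of Painlevé II with parameter `α` such that
`f = 2 u^2 - 2 u' + x` tends to `+∞` at `+∞` and is negative for all
sufficiently negative `x` (as for the Hastings–McLeod-type solutions with
`u(x) ~ -√(-x/2)` as `x → -∞`).  Then `f` has exactly one real zero `x₁`,
`f'(x₁) = 2α + 1`, and the Bäcklund transform `v = -u + (2α+1)/f` (the
quasi-Hastings–McLeod solution with parameter `α + 1`) is continuous off
`x₁` and has a simple pole of residue `+1` at `x₁`. -/
theorem qHM_one_pole (α : ℝ) (hα : α ∈ Set.Ioo (-(1:ℝ)/2) (1/2))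
    (u u' u'' : ℝ → ℝ)
    (hu : ∀ x, HasDerivAt u (u' x) x)
    (hu' : ∀ x, HasDerivAt u' (u'' x) x)
    (hPII : ∀ x, u'' x = 2 * (u x) ^ 3 + x * u x - α)
    (hftop : Tendsto (piiF u u') atTop atTop)
    (hfneg : ∀ᶠ x in atBot, piiF u u' x < 0) :
    ∃ x₁ : ℝ, piiF u u' x₁ = 0 ∧ (∀ y, piiF u u' y = 0 → y = x₁) ∧
      HasDerivAt (piiF u u') (2 * α + 1) x₁ ∧
      ContinuousOn (backlund α u u') {x | x ≠ x₁} ∧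
      Tendsto (fun x => (x - x₁) * backlund α u u' x) (𝓝[≠] x₁) (𝓝 1) := by
  have hc : 0 < 2 * α + 1 := by linarith [hα.1]
  have hucont : Continuous u := continuous_iff_continuousAt.2 fun x => (hu x).continuousAt
  have hfd x := hasDerivAt_piiF (hu x) (hu' x) (hPII x)
  have hfcont : Continuous (piiF u u') :=
    continuous_iff_continuousAt.2 fun x => (hfd x).continuousAt
  obtain ⟨x₁, hx₁⟩ := exists_eq_zero_of_tendsto_atTop_of_eventually_neg hfcont hftop hfneg
  have huniq : ∀ y, piiF u u' y = 0 → y = x₁ := fun y hy =>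
    subsingleton_zeros_of_hasDerivAt_eq_mul_add (hucont.const_mul (-2)) hc hfd hy hx₁
  have hderiv : HasDerivAt (piiF u u') (2 * α + 1) x₁ := by simpa [hx₁] using hfd x₁
  exact ⟨x₁, hx₁, huniq, hderiv,
    (continuousOn_backlund hucont hfcont).mono fun x hx h₀ => hx (huniq x h₀),
    tendsto_sub_mul_backlund hucont.continuousAt hderiv hx₁ hc.ne'⟩
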